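/- arXiv:2604.08144 — 2 statements merged into one kernel-verified Lean document; each statement's English description precedes it below -/
import Mathlib

section
/- Let G=(V,E) be a connected finite graph with n vertices and m edges and α ∈ (0,1). The map F: ℝ^m_+ → ℝ^m defined on weight vectors by F_j(w) = 𝔇_{e_j}^α(w) (the edge entropy of the j-th edge with respect to w) is locally Lipschitz continuous on ℝ^m_+ = {w ∈ ℝ^m : w_e > 0 for all e}; that is, for every compact subset Ω̄ ⊂⊂ ℝ^m_+ there exists a constant C such that |F_j(w) − F_j(w̃)| ≤ C|w − w̃| for all w, w̃ ∈ Ω̄ and all 1 ≤ j ≤ m. -/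
open Finset Filter Topology

namespace EntropyFlowPaper

variable {V : Type*} [Fintype V] [DecidableEq V]

/-- Effective weight: the value of `w` on edges, `0` on non-edges. -/
noncomputable def ew (G : SimpleGraph V) [DecidableRel G.Adj] (w : Sym2 V → ℝ) (a b : V) : ℝ :=
  if G.Adj a b then w s(a, b) else 0

/-- Auxiliary layers: `(layerAux G x j).1 = N_j(x)` and `(layerAux G x j).2 = ⋃_{k ≤ j} N_k(x)`:
the `(j+1)`-st layer consists of the vertices adjacent to `⋃_{k ≤ j} N_k(x)` that do not lie
in `⋃_{k ≤ j} N_k(x)`. -/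
def layerAux (G : SimpleGraph V) [DecidableRel G.Adj] (x : V) : ℕ → Finset V × Finset V
  | 0 => ({x}, {x})
  | (j + 1) =>
      let p := layerAux G x j
      let next := Finset.univ.filter fun u => u ∉ p.2 ∧ ∃ a ∈ p.2, G.Adj u a
      (next, p.2 ∪ next)

/-- The `j`-step neighbor set `N_j(x)`. -/
def layer (G : SimpleGraph V) [DecidableRel G.Adj] (x : V) (j : ℕ) : Finset V :=
  (layerAux G x j).1

/-- The outward-walk probability `P(x, z)`, for `z` in the `ℓ`-th layer `N_ℓ(x)`:
`P(x,z) = Σ_{chains x = z₀, z₁ ∈ N₁(x), …, z_{ℓ-1} ∈ N_{ℓ-1}(x), z_ℓ = z}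
  Π_k w_{z_{k-1} z_k} / (Σ_{u ∈ N_k(x)} w_{z_{k-1} u})`, written recursively. -/
noncomputable def outP (G : SimpleGraph V) [DecidableRel G.Adj] (w : Sym2 V → ℝ) (x : V) :
    ℕ → V → ℝ
  | 0, z => if z = x then 1 else 0
  | (ℓ + 1), z => ∑ y ∈ layer G x ℓ,
      outP G w x ℓ y * ew G w y z / ∑ u ∈ layer G x (ℓ + 1), ew G w y u

/-- The `α`-lazy outward random walk `R_x^α(z)`: it equals `α` at `z = x`; for `z ∈ N_j(x)`
(`j ≥ 1`) it equals `(1-α)^j * α * P(x,z)` if `z` is adjacent to `N_{j+1}(x)`, and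
`(1-α)^j * P(x,z)` otherwise. -/
noncomputable def lazyWalk (G : SimpleGraph V) [DecidableRel G.Adj] (w : Sym2 V → ℝ) (α : ℝ)
    (x z : V) : ℝ :=
  if z = x then α
  else ∑ j ∈ Finset.Icc 1 (Fintype.card V),
    (if z ∈ layer G x j then
      (if ∃ u ∈ layer G x (j + 1), G.Adj z u then (1 - α) ^ j * α * outP G w x j z
       else (1 - α) ^ j * outP G w x j z)
     else 0)

/-- Kullback–Leibler divergence `D_KL(P, Q) = Σ_z P z * log (P z / Q z)` on a finite set. -/
noncomputable def KL (P Q : V → ℝ) : ℝ := ∑ z, P z * Real.log (P z / Q z)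

/-- The edge entropy `𝔇_e^α = D_KL(R_x^α, R_y^α) + D_KL(R_y^α, R_x^α)` for the edge `e = xy`. -/
noncomputable def entropyD (G : SimpleGraph V) [DecidableRel G.Adj] (w : Sym2 V → ℝ) (α : ℝ)
    (x y : V) : ℝ :=
  KL (lazyWalk G w α x) (lazyWalk G w α y) + KL (lazyWalk G w α y) (lazyWalk G w α x)

/-- Euclidean distance `|w - w'|` between two weight vectors, over the edges of `G`. -/
noncomputable def wdist (G : SimpleGraph V) [DecidableRel G.Adj] (w w' : Sym2 V → ℝ) : ℝ :=
  Real.sqrt (∑ e ∈ G.edgeFinset, (w e - w' e) ^ 2)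

/-- `w` is a solution of the entropy flow `w_e'(t) = 𝔇_e^α(t)`, `w_e(t) > 0`, `w_e(0) = w0_e`
on the time set `S`. -/
def IsEntropyFlowSolutionOn (G : SimpleGraph V) [DecidableRel G.Adj] (α : ℝ)
    (w0 : Sym2 V → ℝ) (S : Set ℝ) (w : ℝ → Sym2 V → ℝ) : Prop :=
  (∀ e ∈ G.edgeFinset, w 0 e = w0 e) ∧
  (∀ t ∈ S, ∀ e ∈ G.edgeFinset, 0 < w t e) ∧
  (∀ t ∈ S, ∀ x y : V, G.Adj x y →
    HasDerivWithinAt (fun τ => w τ s(x, y)) (entropyD G (w t) α x y) S t)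

end EntropyFlowPaper


lemma glue_lipschitz {E : Type*} [MetricSpace E] {K : Set E} (hK : IsCompact K) {f : E → ℝ}
    (h : ∀ p ∈ K, ∃ L : NNReal, ∃ t ∈ 𝓝 p, LipschitzOnWith L f t) :
    ∃ C : ℝ, 0 ≤ C ∧ ∀ w ∈ K, ∀ w' ∈ K, |f w - f w'| ≤ C * dist w w' := by
  classical
  -- choose data
  rcases K.eq_empty_or_nonempty with hKe | hKne
  · exact ⟨0, le_rfl, by simp [hKe]⟩
  have hchoice : ∀ p : E, p ∈ K → ∃ L : NNReal, ∃ ε : ℝ, 0 < ε ∧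
      LipschitzOnWith L f (Metric.ball p (2 * ε)) := by
    intro p hp
    obtain ⟨L, t, ht, hlip⟩ := h p hp
    obtain ⟨r, hr, hball⟩ := Metric.mem_nhds_iff.1 ht
    exact ⟨L, r / 2, by linarith, hlip.mono (by rw [show 2 * (r / 2) = r by ring]; exact hball)⟩
  choose L ε hε hlip using hchoice
  -- continuity of f on K
  have hcont : ContinuousOn f K := by
    intro p hp
    exact ((hlip p hp).continuousOn.continuousAt
      (Metric.ball_mem_nhds p (by have := hε p hp; linarith))).continuousWithinAt
  obtain ⟨M, hM⟩ := hK.exists_bound_of_continuousOn hcont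
  have hM0 : 0 ≤ M := le_trans (norm_nonneg _) (hM _ hKne.some_mem)
  -- finite subcover
  obtain ⟨s, hcover⟩ := hK.elim_nhds_subcover'
    (fun p hp => Metric.ball p (ε p hp)) (fun p hp => Metric.ball_mem_nhds p (hε p hp))
  have hsne : s.Nonempty := by
    rcases Set.mem_iUnion₂.1 (hcover hKne.some_mem) with ⟨i, hi, _⟩; exact ⟨i, hi⟩
  set δ : ℝ := s.inf' hsne (fun p => ε p p.2) with hδdef
  have hδ : 0 < δ := by
    rw [hδdef, Finset.lt_inf'_iff]
    exact fun p _ => hε p p.2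
  set Lm : NNReal := s.sup (fun p => L p p.2) with hLm
  refine ⟨max (Lm : ℝ) (2 * M / δ), le_trans (NNReal.coe_nonneg _) (le_max_left _ _), ?_⟩
  intro w hw w' hw'
  obtain ⟨p, hps, hwp⟩ : ∃ p ∈ s, w ∈ Metric.ball (p : E) (ε p p.2) := by
    rcases Set.mem_iUnion₂.1 (hcover hw) with ⟨i, hi, h2⟩; exact ⟨i, hi, h2⟩
  by_cases hd : dist w w' < ε p p.2
  · have hw2 : w ∈ Metric.ball (p : E) (2 * ε p p.2) := by
      rw [Metric.mem_ball] at hwp ⊢; nlinarith [hε p p.2]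
    have hw'2 : w' ∈ Metric.ball (p : E) (2 * ε p p.2) := by
      rw [Metric.mem_ball] at hwp ⊢
      calc dist w' p ≤ dist w' w + dist w p := dist_triangle _ _ _
        _ < 2 * ε p p.2 := by rw [dist_comm w' w]; linarith
    have := (hlip p p.2).dist_le_mul w hw2 w' hw'2
    rw [Real.dist_eq] at this
    refine this.trans ?_
    have h1 : (L p p.2 : ℝ) ≤ (Lm : ℝ) := by
      rw [hLm]; exact_mod_cast NNReal.coe_le_coe.2 (Finset.le_sup (f := fun p : K => L p p.2) hps)
    have := dist_nonneg (x := w) (y := w')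
    nlinarith [le_max_left (Lm : ℝ) (2 * M / δ)]
  · push_neg at hd
    have hδd : δ ≤ dist w w' := le_trans (Finset.inf'_le _ hps) hd
    have hb : |f w - f w'| ≤ 2 * M := by
      have h1 := hM w hw; have h2 := hM w' hw'
      rw [Real.norm_eq_abs] at h1 h2
      have := abs_sub_abs_le_abs_sub (f w) (f w')
      have := abs_sub (f w) (f w')
      calc |f w - f w'| ≤ |f w| + |f w'| := abs_sub _ _
        _ ≤ 2 * M := by linarith
    refine hb.trans ?_
    have : 2 * M ≤ (2 * M / δ) * dist w w' := by
      rw [div_mul_eq_mul_div, le_div_iff₀ hδ]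
      nlinarith
    refine this.trans ?_
    have := dist_nonneg (x := w) (y := w')
    nlinarith [le_max_right (Lm : ℝ) (2 * M / δ)]

namespace EntropyFlowPaper

variable {V : Type*} [Fintype V] [DecidableEq V]
variable (G : SimpleGraph V) [DecidableRel G.Adj] (x : V)

/-- The positive cone of weights. -/
def posW : Set (Sym2 V → ℝ) := {w | ∀ e ∈ G.edgeFinset, 0 < w e}

variable {G}

lemma ew_nonneg {w : Sym2 V → ℝ} (hw : w ∈ posW G) (a b : V) : 0 ≤ ew G w a b := by
  unfold ew
  split_ifs with h
  · exact le_of_lt (hw _ (SimpleGraph.mem_edgeFinset.2 h))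
  · exact le_rfl

lemma ew_pos {w : Sym2 V → ℝ} (hw : w ∈ posW G) {a b : V} (h : G.Adj a b) :
    0 < ew G w a b := by
  unfold ew; rw [if_pos h]; exact hw _ (SimpleGraph.mem_edgeFinset.2 h)

lemma outP_nonneg {w : Sym2 V → ℝ} (hw : w ∈ posW G) (x : V) :
    ∀ ℓ z, 0 ≤ outP G w x ℓ z := by
  intro ℓ
  induction ℓ with
  | zero => intro z; unfold outP; split_ifs <;> norm_num
  | succ ℓ ih =>
    intro z
    unfold outP
    refine Finset.sum_nonneg fun y _ => ?_
    exact div_nonneg (mul_nonneg (ih y) (ew_nonneg hw y z))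
      (Finset.sum_nonneg fun u _ => ew_nonneg hw y u)

lemma layer_zero : layer G x 0 = {x} := rfl

lemma snd_zero : (layerAux G x 0).2 = {x} := rfl

lemma snd_succ (j : ℕ) :
    (layerAux G x (j + 1)).2 = (layerAux G x j).2 ∪ layer G x (j + 1) := rfl

lemma mem_layer_succ {z : V} {j : ℕ} :
    z ∈ layer G x (j + 1) ↔ z ∉ (layerAux G x j).2 ∧ ∃ a ∈ (layerAux G x j).2, G.Adj z a := by
  simp [layer, layerAux]

lemma layer_subset_snd (j : ℕ) : layer G x j ⊆ (layerAux G x j).2 := by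
  cases j with
  | zero => exact Finset.Subset.refl _
  | succ j => rw [snd_succ]; exact Finset.subset_union_right

lemma mem_snd_of_adj {z a : V} {k : ℕ} (ha : a ∈ (layerAux G x k).2) (h : G.Adj z a) :
    z ∈ (layerAux G x (k + 1)).2 := by
  rw [snd_succ]
  by_cases hz : z ∈ (layerAux G x k).2
  · exact Finset.mem_union_left _ hz
  · exact Finset.mem_union_right _ ((mem_layer_succ x).2 ⟨hz, a, ha, h⟩)

lemma snd_mono : ∀ {k l : ℕ}, k ≤ l → (layerAux G x k).2 ⊆ (layerAux G x l).2 := by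
  intro k l h
  induction l with
  | zero => rw [Nat.le_zero.1 h]
  | succ l ih =>
    rcases Nat.lt_or_ge k (l+1) with h' | h'
    · rw [snd_succ]; exact (ih (Nat.lt_succ_iff.1 h')).trans Finset.subset_union_left
    · rw [Nat.le_antisymm h h']

lemma exists_layer_pred {z : V} {ℓ : ℕ} (hz : z ∈ layer G x (ℓ + 1)) :
    ∃ a ∈ layer G x ℓ, G.Adj z a := by
  obtain ⟨hzn, a, ha, hadj⟩ := (mem_layer_succ x).1 hz
  cases ℓ with
  | zero => exact ⟨a, ha, hadj⟩
  | succ k =>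
    rw [snd_succ] at ha
    rcases Finset.mem_union.1 ha with ha' | ha'
    · exact absurd (mem_snd_of_adj x ha' hadj) hzn
    · exact ⟨a, ha', hadj⟩

lemma outP_pos {w : Sym2 V → ℝ} (hw : w ∈ posW G) (x : V) :
    ∀ ℓ, ∀ z ∈ layer G x ℓ, 0 < outP G w x ℓ z := by
  intro ℓ
  induction ℓ with
  | zero =>
    intro z hz
    rw [layer_zero, Finset.mem_singleton] at hz
    unfold outP; rw [if_pos hz]; norm_num
  | succ ℓ ih =>
    intro z hz
    obtain ⟨a, ha, hadj⟩ := exists_layer_pred x hz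
    have hterm : ∀ y ∈ layer G x ℓ,
        0 ≤ outP G w x ℓ y * ew G w y z / ∑ u ∈ layer G x (ℓ + 1), ew G w y u :=
      fun y _ => div_nonneg (mul_nonneg (outP_nonneg hw x ℓ y) (ew_nonneg hw y z))
        (Finset.sum_nonneg fun u _ => ew_nonneg hw y u)
    have hnum : 0 < outP G w x ℓ a * ew G w a z := mul_pos (ih a ha) (ew_pos hw hadj.symm)
    have hden : 0 < ∑ u ∈ layer G x (ℓ + 1), ew G w a u :=
      lt_of_lt_of_le (ew_pos hw hadj.symm)
        (Finset.single_le_sum (fun u _ => ew_nonneg hw a u) hz)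
    have : 0 < ∑ y ∈ layer G x ℓ,
        outP G w x ℓ y * ew G w y z / ∑ u ∈ layer G x (ℓ + 1), ew G w y u :=
      Finset.sum_pos' hterm ⟨a, ha, div_pos hnum hden⟩
    simpa [outP] using this

lemma mem_snd_of_walk : ∀ {y z : V} (p : G.Walk z y), z ∈ (layerAux G y p.length).2 := by
  intro y z p
  induction p with
  | nil => exact Finset.mem_singleton_self _
  | @cons a b c h q ih =>
    rw [SimpleGraph.Walk.length_cons]
    exact mem_snd_of_adj c ih h

lemma mem_layer_of_mem_snd {z : V} : ∀ {m : ℕ}, z ∈ (layerAux G x m).2 →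
    ∃ j ≤ m, z ∈ layer G x j := by
  intro m
  induction m with
  | zero => intro h; exact ⟨0, le_rfl, h⟩
  | succ m ih =>
    intro h
    rw [snd_succ] at h
    rcases Finset.mem_union.1 h with h' | h'
    · obtain ⟨j, hj, hzj⟩ := ih h'; exact ⟨j, hj.trans (Nat.le_succ m), hzj⟩
    · exact ⟨m + 1, le_rfl, h'⟩

lemma exists_layer (hG : G.Connected) {z : V} (hz : z ≠ x) :
    ∃ j, 1 ≤ j ∧ j ≤ Fintype.card V ∧ z ∈ layer G x j := by
  obtain ⟨p⟩ := hG.preconnected z x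
  have hp := mem_snd_of_walk p.toPath.1
  have hlen : p.toPath.1.length ≤ Fintype.card V :=
    le_of_lt (SimpleGraph.Walk.IsPath.length_lt p.toPath.2)
  have := snd_mono x hlen hp
  obtain ⟨j, hj, hzj⟩ := mem_layer_of_mem_snd x this
  refine ⟨j, ?_, hj, hzj⟩
  rcases Nat.eq_zero_or_pos j with rfl | h
  · rw [layer_zero, Finset.mem_singleton] at hzj; exact absurd hzj hz
  · exact h

lemma lazyWalk_pos (hG : G.Connected) {α : ℝ} (hα : α ∈ Set.Ioo (0:ℝ) 1)
    {w : Sym2 V → ℝ} (hw : w ∈ posW G) (x z : V) : 0 < lazyWalk G w α x z := by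
  obtain ⟨hα0, hα1⟩ := hα
  have h1α : (0:ℝ) < 1 - α := by linarith
  unfold lazyWalk
  split_ifs with hzx
  · exact hα0
  · obtain ⟨j, hj1, hjc, hzj⟩ := exists_layer x hG hzx
    refine Finset.sum_pos' (fun i _ => ?_) ⟨j, Finset.mem_Icc.2 ⟨hj1, hjc⟩, ?_⟩
    · split_ifs with h1 h2
      · exact mul_nonneg (mul_nonneg (pow_nonneg h1α.le i) hα0.le) (outP_nonneg hw x i z)
      · exact mul_nonneg (pow_nonneg h1α.le i) (outP_nonneg hw x i z)
      · exact le_rfl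
    · rw [if_pos hzj]
      split_ifs with h2
      · exact mul_pos (mul_pos (pow_pos h1α j) hα0) (outP_pos hw x j z hzj)
      · exact mul_pos (pow_pos h1α j) (outP_pos hw x j z hzj)

lemma isOpen_posW : IsOpen (posW G) := by
  have : posW G = ⋂ e ∈ G.edgeFinset, (fun w : Sym2 V → ℝ => w e) ⁻¹' Set.Ioi 0 := by
    ext w; simp [posW, Set.mem_iInter]
  rw [this]
  exact isOpen_biInter_finset fun e _ => (continuous_apply e).isOpen_preimage _ isOpen_Ioi

lemma contDiffOn_apply (e : Sym2 V) (s : Set (Sym2 V → ℝ)) :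
    ContDiffOn ℝ 1 (fun w : Sym2 V → ℝ => w e) s :=
  ((ContinuousLinearMap.proj e : (Sym2 V → ℝ) →L[ℝ] ℝ).contDiff).contDiffOn

lemma ew_contDiffOn (a b : V) (s : Set (Sym2 V → ℝ)) :
    ContDiffOn ℝ 1 (fun w => ew G w a b) s := by
  unfold ew
  split_ifs with h
  · exact contDiffOn_apply s(a, b) s
  · exact contDiffOn_const

lemma outP_contDiffOn (x : V) : ∀ (ℓ : ℕ) (z : V),
    ContDiffOn ℝ 1 (fun w => outP G w x ℓ z) (posW G) := by
  intro ℓ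
  induction ℓ with
  | zero =>
    intro z
    unfold outP
    split_ifs <;> exact contDiffOn_const
  | succ ℓ ih =>
    intro z
    have : (fun w => outP G w x (ℓ + 1) z) = fun w => ∑ y ∈ layer G x ℓ,
        outP G w x ℓ y * ew G w y z / ∑ u ∈ layer G x (ℓ + 1), ew G w y u := by
      funext w; rw [outP]
    rw [this]
    refine ContDiffOn.sum fun y _ => ?_
    by_cases hy : ∃ u ∈ layer G x (ℓ + 1), G.Adj y u
    · refine ContDiffOn.div ((ih y).mul (ew_contDiffOn y z _))
        (ContDiffOn.sum fun u _ => ew_contDiffOn y u _) ?_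
      intro w hw
      obtain ⟨u, hu, hadj⟩ := hy
      have : 0 < ∑ u ∈ layer G x (ℓ + 1), ew G w y u :=
        lt_of_lt_of_le (ew_pos hw hadj)
          (Finset.single_le_sum (fun v _ => ew_nonneg hw y v) hu)
      exact ne_of_gt this
    · refine ContDiffOn.congr contDiffOn_const (f := fun _ => (0 : ℝ)) ?_
      intro w _
      have hden : ∑ u ∈ layer G x (ℓ + 1), ew G w y u = 0 := by
        refine Finset.sum_eq_zero fun u hu => ?_
        have : ¬ G.Adj y u := fun h => hy ⟨u, hu, h⟩
        simp [ew, this]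
      rw [hden, div_zero]

lemma lazyWalk_contDiffOn (α : ℝ) (x z : V) :
    ContDiffOn ℝ 1 (fun w => lazyWalk G w α x z) (posW G) := by
  unfold lazyWalk
  split_ifs with h
  · exact contDiffOn_const
  · refine ContDiffOn.sum fun j _ => ?_
    split_ifs with h1 h2
    · exact ContDiffOn.mul contDiffOn_const (outP_contDiffOn x j z)
    · exact ContDiffOn.mul contDiffOn_const (outP_contDiffOn x j z)
    · exact contDiffOn_const

lemma entropyD_contDiffOn (hG : G.Connected) {α : ℝ} (hα : α ∈ Set.Ioo (0:ℝ) 1) (x y : V) :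
    ContDiffOn ℝ 1 (fun w => entropyD G w α x y) (posW G) := by
  have hKL : ∀ a b : V, ContDiffOn ℝ 1
      (fun w => KL (lazyWalk G w α a) (lazyWalk G w α b)) (posW G) := by
    intro a b
    unfold KL
    refine ContDiffOn.sum fun z _ => ?_
    refine (lazyWalk_contDiffOn α a z).mul (ContDiffOn.log
      ((lazyWalk_contDiffOn α a z).div (lazyWalk_contDiffOn α b z) ?_) ?_)
    · exact fun w hw => ne_of_gt (lazyWalk_pos hG hα hw b z)
    · intro w hw
      exact ne_of_gt (div_pos (lazyWalk_pos hG hα hw a z) (lazyWalk_pos hG hα hw b z))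
  unfold entropyD
  exact (hKL x y).add (hKL y x)

section Congr

variable {w w' : Sym2 V → ℝ}

lemma ew_congr (hww' : ∀ e ∈ G.edgeFinset, w e = w' e) (a b : V) : ew G w a b = ew G w' a b := by
  unfold ew
  split_ifs with h
  · exact hww' _ (SimpleGraph.mem_edgeFinset.2 h)
  · rfl

lemma outP_congr (hww' : ∀ e ∈ G.edgeFinset, w e = w' e) (x : V) : ∀ ℓ z, outP G w x ℓ z = outP G w' x ℓ z := by
  intro ℓ
  induction ℓ with
  | zero => intro z; rfl
  | succ ℓ ih =>
    intro z
    rw [outP, outP]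
    refine Finset.sum_congr rfl fun y _ => ?_
    rw [ih y, ew_congr hww' y z]
    congr 1
    exact Finset.sum_congr rfl fun u _ => ew_congr hww' y u

lemma lazyWalk_congr (hww' : ∀ e ∈ G.edgeFinset, w e = w' e) (α : ℝ) (x z : V) : lazyWalk G w α x z = lazyWalk G w' α x z := by
  unfold lazyWalk
  split_ifs with h
  · rfl
  · refine Finset.sum_congr rfl fun j _ => ?_
    rw [outP_congr hww' x j z]

lemma entropyD_congr (hww' : ∀ e ∈ G.edgeFinset, w e = w' e) (α : ℝ) (x y : V) : entropyD G w α x y = entropyD G w' α x y := by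
  unfold entropyD KL
  have hx := fun z => lazyWalk_congr hww' α x z
  have hy := fun z => lazyWalk_congr hww' α y z
  congr 1 <;> refine Finset.sum_congr rfl fun z _ => ?_ <;> rw [hx z, hy z]

end Congr

/-- Clamp a weight vector to `1` off the edge set. -/
noncomputable def rho (G : SimpleGraph V) [DecidableRel G.Adj] (w : Sym2 V → ℝ) :
    Sym2 V → ℝ := fun e => if e ∈ G.edgeFinset then w e else 1

lemma rho_eq_on_edges (w : Sym2 V → ℝ) : ∀ e ∈ G.edgeFinset, rho G w e = w e := by
  intro e he; simp [rho, he]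

lemma continuous_rho : Continuous (rho G) := by
  refine continuous_pi fun e => ?_
  unfold rho
  split_ifs with h
  · exact continuous_apply e
  · exact continuous_const

lemma rho_mem_posW {Ω : Set (Sym2 V → ℝ)}
    (hpos : Ω ⊆ {w : Sym2 V → ℝ | ∀ e ∈ G.edgeFinset, 0 < w e}) {w : Sym2 V → ℝ}
    (hw : w ∈ Ω) : rho G w ∈ posW G := by
  intro e he
  rw [rho_eq_on_edges w e he]
  exact hpos hw e he

lemma dist_rho_le_wdist (w w' : Sym2 V → ℝ) : dist (rho G w) (rho G w') ≤ wdist G w w' := by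
  have h0 : 0 ≤ wdist G w w' := Real.sqrt_nonneg _
  rw [dist_pi_le_iff h0]
  intro e
  by_cases he : e ∈ G.edgeFinset
  · rw [rho_eq_on_edges w e he, rho_eq_on_edges w' e he, Real.dist_eq]
    rw [← Real.sqrt_sq_eq_abs]
    exact Real.sqrt_le_sqrt (Finset.single_le_sum (fun i _ => sq_nonneg (w i - w' i)) he)
  · simp [rho, he, h0]

end EntropyFlowPaper



open EntropyFlowPaper

/-- the map `F(w) = (𝔇_{e_j}^α(w))_j` is locally Lipschitz on the positive cone:
on every compact subset of the set of positive weight vectors there is a Lipschitz constant `C`. -/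
theorem entropyD_locally_lipschitz {V : Type*} [Fintype V] [DecidableEq V]
    (G : SimpleGraph V) [DecidableRel G.Adj] (hG : G.Connected)
    (α : ℝ) (hα : α ∈ Set.Ioo (0 : ℝ) 1) :
    ∀ Ω : Set (Sym2 V → ℝ), IsCompact Ω →
      Ω ⊆ {w : Sym2 V → ℝ | ∀ e ∈ G.edgeFinset, 0 < w e} →
      ∃ C : ℝ, ∀ w ∈ Ω, ∀ w' ∈ Ω, ∀ x y : V, G.Adj x y →
        |entropyD G w α x y - entropyD G w' α x y| ≤ C * wdist G w w' := by
  intro Ω hΩ hpos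
  classical
  set K : Set (Sym2 V → ℝ) := rho G '' Ω with hK
  have hKc : IsCompact K := hΩ.image (continuous_rho)
  have hKU : K ⊆ posW G := by
    rintro _ ⟨w, hw, rfl⟩
    exact rho_mem_posW hpos hw
  have hpair : ∀ xy : V × V, ∃ C : ℝ, 0 ≤ C ∧ ∀ p ∈ K, ∀ q ∈ K,
      |entropyD G p α xy.1 xy.2 - entropyD G q α xy.1 xy.2| ≤ C * dist p q := by
    intro xy
    refine glue_lipschitz hKc ?_
    intro p hp
    have hcd : ContDiffAt ℝ 1 (fun w => entropyD G w α xy.1 xy.2) p :=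
      (entropyD_contDiffOn hG hα xy.1 xy.2).contDiffAt (isOpen_posW.mem_nhds (hKU hp))
    exact hcd.exists_lipschitzOnWith
  choose Cf hC0 hC using hpair
  refine ⟨∑ xy : V × V, Cf xy, ?_⟩
  intro w hw w' hw' x y _
  have h1 : entropyD G w α x y = entropyD G (rho G w) α x y :=
    entropyD_congr (fun e he => (rho_eq_on_edges w e he).symm) α x y
  have h2 : entropyD G w' α x y = entropyD G (rho G w') α x y :=
    entropyD_congr (fun e he => (rho_eq_on_edges w' e he).symm) α x y
  have hd := dist_rho_le_wdist (G := G) w w'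
  have hCle : Cf (x, y) ≤ ∑ xy : V × V, Cf xy :=
    Finset.single_le_sum (fun i _ => hC0 i) (Finset.mem_univ (x, y))
  calc |entropyD G w α x y - entropyD G w' α x y|
      = |entropyD G (rho G w) α x y - entropyD G (rho G w') α x y| := by rw [h1, h2]
    _ ≤ Cf (x, y) * dist (rho G w) (rho G w') :=
        hC (x, y) _ ⟨w, hw, rfl⟩ _ ⟨w', hw', rfl⟩
    _ ≤ (∑ xy : V × V, Cf xy) * wdist G w w' := by
        exact mul_le_mul hCle hd dist_nonneg (le_trans (hC0 (x, y)) hCle)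
end

section
/- Let G=(V,E) be a connected finite graph, α ∈ (0,1), and let w(t) be the unique global solution of the entropy flow on [0,+∞). Suppose x, y, z are vertices with xy ∈ E and yz ∈ E, and suppose lim_{t→+∞} w_{yz}(t) = +∞ while w_{xy}(t) remains bounded as t→+∞. This is impossible; more precisely, w_{yz}(t) → +∞ forces R_y^α(x,t) → 0 as t → +∞, which in turn (via the lower bound 𝔇_{xy}^α(t) ≥ α log(α/R_y^α(x,t)) − 2(n−1)e^{−1}) forces w_{xy}'(t) = 𝔇_{xy}^α(t) → +∞ and hence w_{xy}(t) → +∞. -/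
open Finset Filter Topology

open EntropyFlowPaper

section Aux

variable {V : Type*} [Fintype V] [DecidableEq V]
variable (G : SimpleGraph V) [DecidableRel G.Adj]

lemma ew_nonneg {w : Sym2 V → ℝ} (hw : ∀ e ∈ G.edgeFinset, 0 < w e) (a b : V) :
    0 ≤ ew G w a b := by
  unfold ew
  split_ifs with h
  · exact (hw _ (by simp [SimpleGraph.mem_edgeFinset, h])).le
  · exact le_refl 0

lemma outP_nonneg {w : Sym2 V → ℝ} (hw : ∀ e ∈ G.edgeFinset, 0 < w e) (x : V) :
    ∀ ℓ z, 0 ≤ outP G w x ℓ z := by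
  intro ℓ
  induction ℓ with
  | zero => intro z; unfold outP; split_ifs <;> norm_num
  | succ ℓ ih =>
    intro z
    unfold outP
    refine Finset.sum_nonneg fun u _ => div_nonneg (mul_nonneg (ih u) (ew_nonneg G hw u z))
      (Finset.sum_nonneg fun v _ => ew_nonneg G hw u v)

lemma layer_subset_aux2 (x : V) (j : ℕ) : layer G x j ⊆ (layerAux G x j).2 := by
  cases j with
  | zero => exact Finset.Subset.refl _
  | succ j => exact Finset.subset_union_right

lemma aux2_mono (x : V) : ∀ {j k : ℕ}, j ≤ k → (layerAux G x j).2 ⊆ (layerAux G x k).2 := by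
  intro j k h
  induction h with
  | refl => exact Finset.Subset.refl _
  | step h ih => exact ih.trans Finset.subset_union_left

lemma mem_layer_succ_iff (x v : V) (m : ℕ) :
    v ∈ layer G x (m + 1) ↔ v ∉ (layerAux G x m).2 ∧ ∃ a ∈ (layerAux G x m).2, G.Adj v a := by
  simp [layer, layerAux, Finset.mem_filter]

lemma layer_disjoint (x : V) {j k : ℕ} (h : j < k) {v : V} (hv : v ∈ layer G x j) :
    v ∉ layer G x k := by
  obtain ⟨m, rfl⟩ : ∃ m, k = m + 1 := ⟨k - 1, by omega⟩
  intro hk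
  rw [mem_layer_succ_iff] at hk
  exact hk.1 (aux2_mono G x (by omega : j ≤ m) (layer_subset_aux2 G x j hv))

lemma sum_outP_le_one {w : Sym2 V → ℝ} (hw : ∀ e ∈ G.edgeFinset, 0 < w e) (x : V) :
    ∀ ℓ, ∑ z ∈ layer G x ℓ, outP G w x ℓ z ≤ 1 := by
  intro ℓ
  induction ℓ with
  | zero => simp [layer, layerAux, outP]
  | succ ℓ ih =>
    have key : ∑ z ∈ layer G x (ℓ + 1), outP G w x (ℓ + 1) z
        = ∑ u ∈ layer G x ℓ, outP G w x ℓ u *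
            ((∑ z ∈ layer G x (ℓ + 1), ew G w u z) / ∑ z ∈ layer G x (ℓ + 1), ew G w u z) := by
      rw [show (fun z => outP G w x (ℓ + 1) z) = fun z => ∑ u ∈ layer G x ℓ,
          outP G w x ℓ u * ew G w u z / ∑ v ∈ layer G x (ℓ + 1), ew G w u v from rfl,
        Finset.sum_comm]
      refine Finset.sum_congr rfl fun u _ => ?_
      rw [← Finset.sum_div, ← Finset.mul_sum, mul_div_assoc]
    rw [key]
    calc ∑ u ∈ layer G x ℓ, outP G w x ℓ u *
            ((∑ z ∈ layer G x (ℓ + 1), ew G w u z) / ∑ z ∈ layer G x (ℓ + 1), ew G w u z)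
        ≤ ∑ u ∈ layer G x ℓ, outP G w x ℓ u * 1 := by
          refine Finset.sum_le_sum fun u _ => ?_
          exact mul_le_mul_of_nonneg_left (div_self_le_one _) (outP_nonneg G hw x ℓ u)
      _ ≤ 1 := by simpa using ih

lemma outP_le_one {w : Sym2 V → ℝ} (hw : ∀ e ∈ G.edgeFinset, 0 < w e) (x : V) {ℓ : ℕ} {z : V}
    (hz : z ∈ layer G x ℓ) : outP G w x ℓ z ≤ 1 :=
  le_trans (Finset.single_le_sum (fun u _ => outP_nonneg G hw x ℓ u) hz) (sum_outP_le_one G hw x ℓ)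

lemma lazyWalk_nonneg {w : Sym2 V → ℝ} (hw : ∀ e ∈ G.edgeFinset, 0 < w e) {α : ℝ}
    (hα : α ∈ Set.Ioo (0 : ℝ) 1) (x z : V) : 0 ≤ lazyWalk G w α x z := by
  unfold lazyWalk
  split_ifs with h
  · exact hα.1.le
  · refine Finset.sum_nonneg fun j _ => ?_
    have h1 : (0:ℝ) ≤ (1 - α) ^ j := pow_nonneg (by linarith [hα.2]) j
    split_ifs with h2 h3
    · exact mul_nonneg (mul_nonneg h1 hα.1.le) (outP_nonneg G hw x j z)
    · exact mul_nonneg h1 (outP_nonneg G hw x j z)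
    · exact le_refl 0

lemma lazyWalk_le_one {w : Sym2 V → ℝ} (hw : ∀ e ∈ G.edgeFinset, 0 < w e) {α : ℝ}
    (hα : α ∈ Set.Ioo (0 : ℝ) 1) (x z : V) : lazyWalk G w α x z ≤ 1 := by
  unfold lazyWalk
  split_ifs with h
  · exact hα.2.le
  · have hle : ∀ j ∈ Finset.Icc 1 (Fintype.card V),
        (if z ∈ layer G x j then
          (if ∃ u ∈ layer G x (j + 1), G.Adj z u then (1 - α) ^ j * α * outP G w x j z
           else (1 - α) ^ j * outP G w x j z)
         else 0) ≤ (if z ∈ layer G x j then (1:ℝ) else 0) := by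
      intro j _
      obtain ⟨ha0, ha1⟩ := hα
      have h0 : (0:ℝ) ≤ 1 - α := by linarith
      have hpow : (1 - α) ^ j ≤ 1 := pow_le_one₀ h0 (by linarith)
      have hpnn : (0:ℝ) ≤ (1 - α) ^ j := pow_nonneg h0 j
      have hout := outP_nonneg G hw x j z
      split_ifs with hz h2
      · have hout1 := outP_le_one G hw x hz
        exact le_trans (mul_le_mul (mul_le_mul hpow ha1.le ha0.le zero_le_one) hout1 hout
          (by norm_num)) (by norm_num)
      · have hout1 := outP_le_one G hw x hz
        exact le_trans (mul_le_mul hpow hout1 hout zero_le_one) (by norm_num)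
      · exact le_refl (0:ℝ)
    refine le_trans (Finset.sum_le_sum hle) ?_
    rw [Finset.sum_boole]
    have hcard : ((Finset.Icc 1 (Fintype.card V)).filter fun j => z ∈ layer G x j).card ≤ 1 := by
      refine Finset.card_le_one.2 fun a ha b hb => ?_
      simp only [Finset.mem_filter] at ha hb
      by_contra hab
      rcases lt_or_gt_of_ne hab with hlt | hlt
      · exact layer_disjoint G x hlt ha.2 hb.2
      · exact layer_disjoint G x hlt hb.2 ha.2
    exact_mod_cast hcard

lemma kl_term_ge {p q : ℝ} (hp : 0 ≤ p) (hq0 : 0 ≤ q) (hq : q ≤ 1) :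
    -1 ≤ p * Real.log (p / q) := by
  rcases eq_or_lt_of_le hp with hp0 | hp0
  · simp [← hp0]
  rcases eq_or_lt_of_le hq0 with hq0' | hq0'
  · simp [← hq0']
  have hlog : Real.log (q / p) ≤ q / p - 1 := Real.log_le_sub_one_of_pos (by positivity)
  have hinv : Real.log (p / q) = -Real.log (q / p) := by
    rw [← Real.log_inv, inv_div]
  have hpq : p * (q / p) = q := by field_simp
  nlinarith [mul_le_mul_of_nonneg_left hlog hp]

lemma KL_ge_of_bounds (P Q : V → ℝ) (hP : ∀ v, 0 ≤ P v) (hQ0 : ∀ v, 0 ≤ Q v)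
    (hQ : ∀ v, Q v ≤ 1) (x : V) :
    P x * Real.log (P x / Q x) - ((Fintype.card V : ℝ) - 1) ≤ KL P Q := by
  unfold KL
  rw [← Finset.add_sum_erase _ _ (Finset.mem_univ x)]
  have h1 : ∑ v ∈ Finset.univ.erase x, (-1 : ℝ)
      ≤ ∑ v ∈ Finset.univ.erase x, P v * Real.log (P v / Q v) :=
    Finset.sum_le_sum fun v _ => kl_term_ge (hP v) (hQ0 v) (hQ v)
  have h2 : ∑ v ∈ Finset.univ.erase x, (-1 : ℝ) = -((Fintype.card V : ℝ) - 1) := by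
    have h3 : 0 < Fintype.card V := Fintype.card_pos_iff.2 ⟨x⟩
    rw [Finset.sum_const, Finset.card_erase_of_mem (Finset.mem_univ x), Finset.card_univ,
      nsmul_eq_mul, Nat.cast_sub h3]
    push_cast
    ring
  linarith

lemma KL_ge_neg_card (P Q : V → ℝ) (hP : ∀ v, 0 ≤ P v) (hQ0 : ∀ v, 0 ≤ Q v)
    (hQ : ∀ v, Q v ≤ 1) : -(Fintype.card V : ℝ) ≤ KL P Q := by
  unfold KL
  have h1 : ∑ v : V, (-1 : ℝ) ≤ ∑ v : V, P v * Real.log (P v / Q v) :=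
    Finset.sum_le_sum fun v _ => kl_term_ge (hP v) (hQ0 v) (hQ v)
  simpa using h1

lemma mem_layer_one {x u : V} (h : G.Adj x u) : u ∈ layer G x 1 := by
  rw [show (1:ℕ) = 0 + 1 from rfl, mem_layer_succ_iff]
  refine ⟨?_, x, ?_, h.symm⟩
  · simp only [layerAux, Finset.mem_singleton]
    exact h.ne'
  · simp [layerAux]

lemma lazyWalk_adj_bounds {w : Sym2 V → ℝ} {α : ℝ} (hα : α ∈ Set.Ioo (0 : ℝ) 1)
    {y x : V} (h : G.Adj y x) (hw : ∀ e ∈ G.edgeFinset, 0 < w e) :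
    (1 - α) * α * (ew G w y x / ∑ u ∈ layer G y 1, ew G w y u) ≤ lazyWalk G w α y x ∧
    lazyWalk G w α y x ≤ ew G w y x / ∑ u ∈ layer G y 1, ew G w y u := by
  have hxy : x ≠ y := h.ne'
  have hx1 : x ∈ layer G y 1 := mem_layer_one G h
  have hcard : 1 ∈ Finset.Icc 1 (Fintype.card V) :=
    Finset.mem_Icc.2 ⟨le_refl 1, Fintype.card_pos_iff.2 ⟨y⟩⟩
  have hP : outP G w y 1 x = ew G w y x / ∑ u ∈ layer G y 1, ew G w y u := by
    show ∑ u ∈ layer G y 0, outP G w y 0 u * ew G w u x / ∑ v ∈ layer G y 1, ew G w u v = _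
    simp [layer, layerAux, outP]
  have hPnn : (0:ℝ) ≤ ew G w y x / ∑ u ∈ layer G y 1, ew G w y u :=
    div_nonneg (ew_nonneg G hw y x) (Finset.sum_nonneg fun u _ => ew_nonneg G hw y u)
  have hsum : lazyWalk G w α y x =
      (if ∃ u ∈ layer G y (1 + 1), G.Adj x u then (1 - α) ^ 1 * α * outP G w y 1 x
       else (1 - α) ^ 1 * outP G w y 1 x) := by
    unfold lazyWalk
    rw [if_neg hxy,
      Finset.sum_eq_single_of_mem 1 hcard fun j hj hj1 =>
        if_neg (layer_disjoint G y (lt_of_le_of_ne (Finset.mem_Icc.1 hj).1 (Ne.symm hj1)) hx1),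
      if_pos hx1]
    congr 1
  rw [hsum, hP]
  obtain ⟨ha0, ha1⟩ := hα
  set P := ew G w y x / ∑ u ∈ layer G y 1, ew G w y u with hPdef
  have hb1 : (1 - α) * α ≤ 1 := by nlinarith
  have hb2 : (1 - α) ≤ 1 := by linarith
  have hb3 : (1 - α) * α ≤ (1 - α) := by nlinarith
  constructor
  · split_ifs with hc
    · rw [pow_one]
    · rw [pow_one]
      exact mul_le_mul_of_nonneg_right hb3 hPnn
  · split_ifs with hc
    · rw [pow_one]
      calc (1 - α) * α * P ≤ 1 * P := mul_le_mul_of_nonneg_right hb1 hPnn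
        _ = P := one_mul P
    · rw [pow_one]
      calc (1 - α) * P ≤ 1 * P := mul_le_mul_of_nonneg_right hb2 hPnn
        _ = P := one_mul P

end Aux

/-- along the global solution of the entropy flow, it is impossible that the weight
of an edge `yz` tends to `+∞` while the weight of an adjacent edge `xy` stays bounded. -/
theorem entropyFlow_no_mixed_behaviour {V : Type*} [Fintype V] [DecidableEq V]
    (G : SimpleGraph V) [DecidableRel G.Adj] (hG : G.Connected)
    (α : ℝ) (hα : α ∈ Set.Ioo (0 : ℝ) 1)
    (w0 : Sym2 V → ℝ) (hw0 : ∀ e ∈ G.edgeFinset, 0 < w0 e)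
    (w : ℝ → Sym2 V → ℝ)
    (hsol : IsEntropyFlowSolutionOn G α w0 (Set.Ici 0) w)
    (x y z : V) (hxy : G.Adj x y) (hyz : G.Adj y z)
    (hinf : Tendsto (fun t => w t s(y, z)) atTop atTop)
    (hbdd : ∃ M : ℝ, ∀ t ∈ Set.Ici (0 : ℝ), w t s(x, y) ≤ M) :
    False := by
  obtain ⟨M, hM⟩ := hbdd
  obtain ⟨hα0, hα1⟩ := hα
  obtain ⟨hw_init, hw_pos, hw_deriv⟩ := hsol
  have hxyE : s(x, y) ∈ G.edgeFinset := by simp [SimpleGraph.mem_edgeFinset, hxy]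
  have hyzE : s(y, z) ∈ G.edgeFinset := by simp [SimpleGraph.mem_edgeFinset, hyz]
  by_cases hzx : z = x
  · subst hzx
    rw [show (s(y, z) : Sym2 V) = s(z, y) from Sym2.eq_swap] at hinf
    obtain ⟨t, ht⟩ := ((hinf.eventually_gt_atTop M).and (eventually_ge_atTop (0:ℝ))).exists
    exact absurd (hM t ht.2) (not_le.2 ht.1)
  have hM0 : 0 < M := lt_of_lt_of_le (hw_pos 0 (Set.mem_Ici.2 le_rfl) _ hxyE)
    (hM 0 (Set.mem_Ici.2 le_rfl))
  set n : ℝ := (Fintype.card V : ℝ) with hn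
  set C : ℝ := Real.exp ((1 + 2 * n + α * Real.log M - α * Real.log α) / α) with hC
  have key : ∀ t : ℝ, 0 ≤ t → C ≤ w t s(y, z) → 1 ≤ entropyD G (w t) α x y := by
    intro t ht hCt
    have hpos : ∀ e ∈ G.edgeFinset, 0 < w t e := hw_pos t ht
    have haxy : 0 < w t s(x, y) := hpos _ hxyE
    have hayz : 0 < w t s(y, z) := hpos _ hyzE
    have hewx : ew G (w t) y x = w t s(x, y) := by
      rw [ew, if_pos hxy.symm, show (s(y, x) : Sym2 V) = s(x, y) from Sym2.eq_swap]
    have hewz : ew G (w t) y z = w t s(y, z) := by rw [ew, if_pos hyz]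
    have hSge : w t s(x, y) + w t s(y, z) ≤ ∑ u ∈ layer G y 1, ew G (w t) y u := by
      have hsub : ({x, z} : Finset V) ⊆ layer G y 1 := by
        intro u hu
        rcases Finset.mem_insert.1 hu with rfl | hu
        · exact mem_layer_one G hxy.symm
        · rw [Finset.mem_singleton] at hu; subst hu; exact mem_layer_one G hyz
      calc w t s(x, y) + w t s(y, z) = ∑ u ∈ ({x, z} : Finset V), ew G (w t) y u := by
            rw [Finset.sum_pair (fun h => hzx h.symm), hewx, hewz]
        _ ≤ _ := Finset.sum_le_sum_of_subset_of_nonneg hsub fun u _ _ => ew_nonneg G hpos y u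
    have hSpos : 0 < ∑ u ∈ layer G y 1, ew G (w t) y u := lt_of_lt_of_le (by linarith) hSge
    obtain ⟨hlow, hupp⟩ := lazyWalk_adj_bounds G ⟨hα0, hα1⟩ (hxy.symm) hpos
    set r := lazyWalk G (w t) α y x with hr
    have h1α : 0 < 1 - α := by linarith
    have hrpos : 0 < r := by
      refine lt_of_lt_of_le ?_ hlow
      rw [hewx]
      exact mul_pos (mul_pos h1α hα0) (div_pos haxy hSpos)
    have hrM : r ≤ M / w t s(y, z) := by
      have h1 : r ≤ w t s(x, y) / ∑ u ∈ layer G y 1, ew G (w t) y u := by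
        rw [← hewx]; exact hupp
      have h2 : w t s(x, y) / ∑ u ∈ layer G y 1, ew G (w t) y u
          ≤ w t s(x, y) / (w t s(x, y) + w t s(y, z)) := by
        exact div_le_div_of_nonneg_left haxy.le (by linarith) hSge
      have h3 : w t s(x, y) / (w t s(x, y) + w t s(y, z)) ≤ M / w t s(y, z) := by
        rw [div_le_div_iff₀ (by linarith) hayz]
        have hMxy : w t s(x, y) ≤ M := hM t ht
        nlinarith
      linarith
    have hRx0 : ∀ v, 0 ≤ lazyWalk G (w t) α x v := lazyWalk_nonneg G hpos ⟨hα0, hα1⟩ x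
    have hRy0 : ∀ v, 0 ≤ lazyWalk G (w t) α y v := lazyWalk_nonneg G hpos ⟨hα0, hα1⟩ y
    have hRx1 : ∀ v, lazyWalk G (w t) α x v ≤ 1 := lazyWalk_le_one G hpos ⟨hα0, hα1⟩ x
    have hRy1 : ∀ v, lazyWalk G (w t) α y v ≤ 1 := lazyWalk_le_one G hpos ⟨hα0, hα1⟩ y
    have hKL1 := KL_ge_of_bounds (lazyWalk G (w t) α x) (lazyWalk G (w t) α y) hRx0 hRy0 hRy1 x
    have hKL2 := KL_ge_neg_card (lazyWalk G (w t) α y) (lazyWalk G (w t) α x) hRy0 hRx0 hRx1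
    have hRxx : lazyWalk G (w t) α x x = α := by simp [lazyWalk]
    rw [hRxx] at hKL1
    have hlogr : Real.log r ≤ Real.log M - Real.log (w t s(y, z)) := by
      calc Real.log r ≤ Real.log (M / w t s(y, z)) := Real.log_le_log hrpos hrM
        _ = _ := Real.log_div (ne_of_gt hM0) (ne_of_gt hayz)
    have hlogb : (1 + 2 * n + α * Real.log M - α * Real.log α) / α ≤ Real.log (w t s(y, z)) := by
      calc (1 + 2 * n + α * Real.log M - α * Real.log α) / α
          = Real.log C := (Real.log_exp _).symm
        _ ≤ Real.log (w t s(y, z)) := Real.log_le_log (Real.exp_pos _) hCt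
    have hterm : α * Real.log (α / r) = α * Real.log α - α * Real.log r := by
      rw [Real.log_div (ne_of_gt hα0) (ne_of_gt hrpos)]; ring
    have hXα : α * ((1 + 2 * n + α * Real.log M - α * Real.log α) / α)
        = 1 + 2 * n + α * Real.log M - α * Real.log α := by field_simp
    have hs1 := mul_le_mul_of_nonneg_left hlogb hα0.le
    have hs2 := mul_le_mul_of_nonneg_left hlogr hα0.le
    unfold entropyD
    linarith [hKL1, hKL2]
  obtain ⟨T, hT⟩ := Filter.eventually_atTop.1
    ((hinf.eventually_ge_atTop C).and (eventually_ge_atTop (0:ℝ)))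
  have hT0 : (0:ℝ) ≤ T := (hT T le_rfl).2
  set f : ℝ → ℝ := fun t => w t s(x, y) with hf
  have hcont : ContinuousOn f (Set.Ici T) := fun t ht =>
    ((hw_deriv t (Set.mem_Ici.2 (hT0.trans ht)) x y hxy).mono
      (Set.Ici_subset_Ici.2 hT0)).continuousWithinAt
  have hDat : ∀ t ∈ interior (Set.Ici T), HasDerivAt f (entropyD G (w t) α x y) t := by
    intro t ht
    rw [interior_Ici] at ht
    exact (hw_deriv t (Set.mem_Ici.2 (hT0.trans (le_of_lt ht))) x y hxy).hasDerivAt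
      (Ici_mem_nhds (by linarith [Set.mem_Ioi.1 ht]))
  have hdiff : DifferentiableOn ℝ f (interior (Set.Ici T)) := fun t ht =>
    ((hDat t ht).differentiableAt).differentiableWithinAt
  have hge : ∀ t ∈ interior (Set.Ici T), (1:ℝ) ≤ deriv f t := by
    intro t ht
    rw [(hDat t ht).deriv]
    rw [interior_Ici] at ht
    have ht' := Set.mem_Ioi.1 ht
    exact key t (by linarith) (hT t ht'.le).1
  have hmem : T + (M + 1) ∈ Set.Ici T := Set.mem_Ici.2 (by linarith)
  have hmain := (convex_Ici T).mul_sub_le_image_sub_of_le_deriv hcont hdiff hge T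
    Set.self_mem_Ici (T + (M + 1)) hmem (by linarith)
  have hfT : 0 < f T := hw_pos T (Set.mem_Ici.2 hT0) _ hxyE
  have hfM : f (T + (M + 1)) ≤ M := hM _ (Set.mem_Ici.2 (by linarith))
  simp only [one_mul] at hmain
  linarith
end
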